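/- Every nondeterministic mso definable graph transduction equals the composition of a nondeterministic node relabelling followed by a deterministic (parameterless) mso definable graph transduction; conversely, every such composition is a nondeterministic mso definable graph transduction. That is, grNMSO = grREL ∘ grMSO. -/

import Mathlib

/-- Monadic second-order logic over graphs with node labels `S` and edge
labels `G`.  Node variables and node-set variables are both indexed by `ℕ`. -/
inductive MSO (S G : Type) : Type
  | lab : S → ℕ → MSO S G
  | edge : G → ℕ → ℕ → MSO S G
  | eq : ℕ → ℕ → MSO S G
  | mem : ℕ → ℕ → MSO S G
  | not : MSO S G → MSO S G
  | and : MSO S G → MSO S G → MSO S G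
  | exN : ℕ → MSO S G → MSO S G
  | exS : ℕ → MSO S G → MSO S G

/-- A finite graph with node labels `S` and edge labels `G`. -/
structure LGraph (S G : Type) where
  V : Type
  finV : Finite V
  E : Set (V × G × V)
  lab : V → S

/-- Satisfaction of an MSO formula in a graph, under a (partial) valuation of
the node variables and a valuation of the node-set variables.  (Partiality of
node valuations caters for the empty graph.) -/
def MSO.Sat {S G : Type} (g : LGraph S G) (ν : ℕ → Option g.V) (μ : ℕ → Set g.V) :
    MSO S G → Prop
  | .lab σ x => ∃ v, ν x = some v ∧ g.lab v = σ
  | .edge γ x y => ∃ u v, ν x = some u ∧ ν y = some v ∧ (u, γ, v) ∈ g.E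
  | .eq x y => ∃ v, ν x = some v ∧ ν y = some v
  | .mem x X => ∃ v, ν x = some v ∧ v ∈ μ X
  | .not φ => ¬ MSO.Sat g ν μ φ
  | .and φ ψ => MSO.Sat g ν μ φ ∧ MSO.Sat g ν μ ψ
  | .exN x φ => ∃ v : g.V, MSO.Sat g (Function.update ν x (some v)) μ φ
  | .exS X φ => ∃ U : Set g.V, MSO.Sat g ν (Function.update μ X U) φ

/-- Free node variables of an MSO formula. -/
def MSO.freeN {S G : Type} : MSO S G → Finset ℕ
  | .lab _ x => {x}
  | .edge _ x y => {x, y}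
  | .eq x y => {x, y}
  | .mem x _ => {x}
  | .not φ => φ.freeN
  | .and φ ψ => φ.freeN ∪ ψ.freeN
  | .exN x φ => φ.freeN.erase x
  | .exS _ φ => φ.freeN

/-- Free node-set variables of an MSO formula. -/
def MSO.freeS {S G : Type} : MSO S G → Finset ℕ
  | .lab _ _ => ∅
  | .edge _ _ _ => ∅
  | .eq _ _ => ∅
  | .mem _ X => {X}
  | .not φ => φ.freeS
  | .and φ ψ => φ.freeS ∪ ψ.freeS
  | .exN _ φ => φ.freeS
  | .exS X φ => φ.freeS.erase X

/-- Satisfaction of a closed formula. -/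
def SatClosed {S G : Type} (g : LGraph S G) (φ : MSO S G) : Prop :=
  φ.Sat g (fun _ => none) (fun _ => ∅)

/-- Graph isomorphism (label- and edge-preserving bijection on nodes). -/
def LGraph.Iso {S G : Type} (g h : LGraph S G) : Prop :=
  ∃ e : g.V ≃ h.V, (∀ v, h.lab (e v) = g.lab v) ∧
    ∀ u γ v, (u, γ, v) ∈ g.E ↔ (e u, γ, e v) ∈ h.E

/-- The empty graph. -/
def LGraph.empty (S G : Type) : LGraph S G :=
  { V := Empty, finV := inferInstance, E := ∅, lab := fun v => v.elim }

/-- Valuation sending node variable `0` to `u` (all others undefined). -/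
def valN {V : Type} (u : V) : ℕ → Option V :=
  fun n => if n = 0 then some u else none

/-- Valuation sending node variable `0` to `u` and `1` to `v`. -/
def valN2 {V : Type} (u v : V) : ℕ → Option V :=
  fun n => if n = 0 then some u else if n = 1 then some v else none

/-- An mso definable graph transduction with `k` parameters (set variables
`0, …, k-1`); it is deterministic (parameterless) when `k = 0`.  It consists
of a domain formula, a finite copy set `C`, node formulas (free node variable
`0`) and edge formulas (free node variables `0`, `1`). -/
structure MSOT (S1 G1 S2 G2 : Type) where
  k : ℕ
  C : Type
  finC : Finite C
  dom : MSO S1 G1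
  dom_free : dom.freeN = ∅ ∧ dom.freeS ⊆ Finset.range k
  nodeF : S2 → C → MSO S1 G1
  nodeF_free : ∀ σ c, (nodeF σ c).freeN ⊆ {0} ∧ (nodeF σ c).freeS ⊆ Finset.range k
  edgeF : G2 → C → C → MSO S1 G1
  edgeF_free : ∀ γ c d, (edgeF γ c d).freeN ⊆ {0, 1} ∧ (edgeF γ c d).freeS ⊆ Finset.range k

/-- The output graph of an mso transduction on input `g`, for a given
valuation `μ` of the parameters: nodes are the copies `(u, c)` at which
exactly one node formula holds, labelled by that unique label, and edges are
given by the edge formulas. -/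
noncomputable def MSOT.outputVal {S1 G1 S2 G2 : Type} (τ : MSOT S1 G1 S2 G2)
    (g : LGraph S1 G1) (μ : ℕ → Set g.V) : LGraph S2 G2 :=
  { V := { p : g.V × τ.C // ∃! σ : S2, (τ.nodeF σ p.2).Sat g (valN p.1) μ }
    finV := by haveI := g.finV; haveI := τ.finC; infer_instance
    E := { e | (τ.edgeF e.2.1 e.1.1.2 e.2.2.1.2).Sat g (valN2 e.1.1.1 e.2.2.1.1) μ }
    lab := fun p => p.2.choose }

/-- The relation computed by an mso transduction: for some valuation of the
parameters (set variables `< k`) satisfying the domain formula, the output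
graph is isomorphic to `h`. -/
def MSOT.Realizes {S1 G1 S2 G2 : Type} (τ : MSOT S1 G1 S2 G2)
    (g : LGraph S1 G1) (h : LGraph S2 G2) : Prop :=
  ∃ μ : ℕ → Set g.V, (∀ n, τ.k ≤ n → μ n = ∅) ∧
    τ.dom.Sat g (fun _ => none) μ ∧ LGraph.Iso (τ.outputVal g μ) h

/-- A graph `g` is in the domain of the transduction (for `k = 0`,
membership in the domain). -/
def MSOT.InDom {S1 G1 S2 G2 : Type} (τ : MSOT S1 G1 S2 G2) (g : LGraph S1 G1) : Prop :=
  SatClosed g τ.dom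

/-- The node representation `ngr w` of a string `w`: one node per position,
labelled by the corresponding symbol, with unlabelled successor edges. -/
def ngr {S : Type} (w : List S) : LGraph S Unit where
  V := Fin w.length
  finV := inferInstance
  E := { e | ∃ (i : ℕ) (h1 : i < w.length) (h2 : i + 1 < w.length),
          e = (⟨i, h1⟩, (), ⟨i + 1, h2⟩) }
  lab := w.get

/-- The edge representation `egr w` of a string `w`: `|w|+1` unlabelled
nodes, consecutive edges labelled by the symbols of `w`. -/
def egr {S : Type} (w : List S) : LGraph Unit S where
  V := Fin (w.length + 1)
  finV := inferInstance
  E := { e | ∃ i : Fin w.length, e = (i.castSucc, w.get i, i.succ) }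
  lab := fun _ => ()

/-- The nondeterministic node relabelling determined by `R ⊆ S1 × S2`
(as a relation between graphs, up to the identity of nodes). -/
def RelabelRel {S1 S2 G : Type} (R : S1 → S2 → Prop) (g : LGraph S1 G) (h : LGraph S2 G) : Prop :=
  ∃ e : g.V ≃ h.V, (∀ v, R (g.lab v) (h.lab (e v))) ∧
    ∀ u γ v, (u, γ, v) ∈ g.E ↔ (e u, γ, e v) ∈ h.E

/-- `m` is an mso definable string transduction (via the edge representation,
deterministic/parameterless). -/
def MSOe {A B : Type} (m : List A → List B → Prop) : Prop :=
  ∃ τ : MSOT Unit A Unit B, τ.k = 0 ∧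
    ∀ (g : LGraph Unit A) (h : LGraph Unit B),
      τ.Realizes g h ↔ ∃ w z, m w z ∧ LGraph.Iso g (egr w) ∧ LGraph.Iso h (egr z)

/-- `m` is a nondeterministic mso definable string transduction (via the edge
representation, with parameters). -/
def NMSOe {A B : Type} (m : List A → List B → Prop) : Prop :=
  ∃ τ : MSOT Unit A Unit B,
    ∀ (g : LGraph Unit A) (h : LGraph Unit B),
      τ.Realizes g h ↔ ∃ w z, m w z ∧ LGraph.Iso g (egr w) ∧ LGraph.Iso h (egr z)

/-- `m` is an (ε-restricted) mso definable string transduction via the node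
representation (deterministic/parameterless). -/
def MSOn {A B : Type} (m : List A → List B → Prop) : Prop :=
  ∃ τ : MSOT A Unit B Unit, τ.k = 0 ∧
    ∀ (g : LGraph A Unit) (h : LGraph B Unit),
      τ.Realizes g h ↔ ∃ w z, m w z ∧ LGraph.Iso g (ngr w) ∧ LGraph.Iso h (ngr z)


/-!
Parameters and node labels are interchangeable. Given a valuation of the `k` parameters, record
at every node, next to its label, the set of parameters containing it: on the relabelled graph
the parameters are definable from the labels, so the transduction becomes parameterless, and the
relabellings whose first component is the old label are exactly the ones arising this way.
Conversely, a relabelling into a finite alphabet `S'` is guessed by one parameter per new label;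
the domain formula checks that these parameters partition the nodes compatibly with `R`, and the
label tests of the parameterless transduction become membership tests.
-/

namespace MSO

variable {S G : Type}

def falseF : MSO S G := .and (.exN 0 (.eq 0 0)) (.not (.exN 0 (.eq 0 0)))

def orF (φ ψ : MSO S G) : MSO S G := .not (.and (.not φ) (.not ψ))

def allN (x : ℕ) (φ : MSO S G) : MSO S G := .not (.exN x (.not φ))

def disj : List (MSO S G) → MSO S G
  | [] => falseF
  | φ :: l => orF φ (disj l)

def conj (l : List (MSO S G)) : MSO S G := .not (disj (l.map .not))

open Classical in
noncomputable def labWith [Fintype S] (P : S → Prop) (x : ℕ) : MSO S G :=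
  disj ((Finset.univ.filter P).toList.map (lab · x))

section Semantics

variable {g : LGraph S G} {ν : ℕ → Option g.V} {μ : ℕ → Set g.V}

@[simp] theorem sat_orF {φ ψ : MSO S G} : (orF φ ψ).Sat g ν μ ↔ φ.Sat g ν μ ∨ ψ.Sat g ν μ := by
  simp only [orF, Sat]; tauto

@[simp] theorem sat_allN {x : ℕ} {φ : MSO S G} :
    (allN x φ).Sat g ν μ ↔ ∀ v, φ.Sat g (Function.update ν x (some v)) μ := by
  simp [allN, Sat]

@[simp] theorem sat_disj {l : List (MSO S G)} : (disj l).Sat g ν μ ↔ ∃ φ ∈ l, φ.Sat g ν μ := by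
  induction l with
  | nil => simp [disj, falseF, Sat]
  | cons φ l ih => simp [disj, ih]

@[simp] theorem sat_conj {l : List (MSO S G)} : (conj l).Sat g ν μ ↔ ∀ φ ∈ l, φ.Sat g ν μ := by
  simp [conj, Sat]

@[simp] theorem sat_labWith [Fintype S] {P : S → Prop} {x : ℕ} :
    (labWith P x).Sat g ν μ ↔ ∃ v, ν x = some v ∧ P (g.lab v) := by
  simp [labWith, Sat, and_comm]

end Semantics

theorem freeN_disj_subset {l : List (MSO S G)} {A : Finset ℕ} (h : ∀ φ ∈ l, φ.freeN ⊆ A) :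
    (disj l).freeN ⊆ A := by
  induction l with
  | nil => simp [disj, falseF, freeN]
  | cons φ l ih =>
      exact Finset.union_subset (h φ (by simp)) (ih fun ψ hψ => h ψ (by simp [hψ]))

theorem freeS_disj_subset {l : List (MSO S G)} {A : Finset ℕ} (h : ∀ φ ∈ l, φ.freeS ⊆ A) :
    (disj l).freeS ⊆ A := by
  induction l with
  | nil => simp [disj, falseF, freeS]
  | cons φ l ih =>
      exact Finset.union_subset (h φ (by simp)) (ih fun ψ hψ => h ψ (by simp [hψ]))

theorem freeN_conj_subset {l : List (MSO S G)} {A : Finset ℕ} (h : ∀ φ ∈ l, φ.freeN ⊆ A) :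
    (conj l).freeN ⊆ A :=
  freeN_disj_subset (by simpa [freeN] using h)

theorem freeS_conj_subset {l : List (MSO S G)} {A : Finset ℕ} (h : ∀ φ ∈ l, φ.freeS ⊆ A) :
    (conj l).freeS ⊆ A :=
  freeS_disj_subset (by simpa [freeS] using h)

theorem freeN_labWith_subset [Fintype S] (P : S → Prop) (x : ℕ) :
    (labWith P x : MSO S G).freeN ⊆ {x} :=
  freeN_disj_subset (by simp [freeN])

theorem freeS_labWith [Fintype S] (P : S → Prop) (x : ℕ) : (labWith P x : MSO S G).freeS = ∅ :=
  Finset.subset_empty.mp (freeS_disj_subset (by simp [freeS]))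

end MSO

namespace LGraph

variable {S S' G : Type}

theorem Iso.refl (g : LGraph S G) : g.Iso g :=
  ⟨Equiv.refl _, fun _ => rfl, fun _ _ _ => Iff.rfl⟩

theorem Iso.symm {g h : LGraph S G} : g.Iso h → h.Iso g := by
  rintro ⟨e, hlab, hedge⟩
  refine ⟨e.symm, fun v => ?_, fun u γ v => ?_⟩
  · rw [← hlab, e.apply_symm_apply]
  · rw [hedge, e.apply_symm_apply, e.apply_symm_apply]

theorem Iso.trans {g h k : LGraph S G} : g.Iso h → h.Iso k → g.Iso k := by
  rintro ⟨e, hlab, hedge⟩ ⟨e', hlab', hedge'⟩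
  exact ⟨e.trans e', fun v => (hlab' _).trans (hlab v),
    fun u γ v => (hedge u γ v).trans (hedge' _ _ _)⟩

abbrev relabel (g : LGraph S G) (l : g.V → S') : LGraph S' G :=
  ⟨g.V, g.finV, g.E, l⟩

theorem relabelRel_iff {R : S → S' → Prop} {g : LGraph S G} {f : LGraph S' G} :
    RelabelRel R g f ↔ ∃ l : g.V → S', (∀ v, R (g.lab v) (l v)) ∧ (g.relabel l).Iso f := by
  constructor
  · rintro ⟨e, hR, hedge⟩
    exact ⟨f.lab ∘ e, hR, e, fun _ => rfl, hedge⟩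
  · rintro ⟨l, hR, e, hlab, hedge⟩
    exact ⟨e, fun v => hlab v ▸ hR v, hedge⟩

end LGraph

theorem valN_map {V W : Type} (e : V → W) (u : V) (n : ℕ) : (valN u n).map e = valN (e u) n := by
  unfold valN; split_ifs <;> rfl

theorem valN2_map {V W : Type} (e : V → W) (u v : V) (n : ℕ) :
    (valN2 u v n).map e = valN2 (e u) (e v) n := by
  unfold valN2; split_ifs <;> rfl

theorem MSO.sat_iff_of_equiv {S G : Type} {g g' : LGraph S G} (e : g.V ≃ g'.V)
    (hlab : ∀ v, g'.lab (e v) = g.lab v) (hedge : ∀ u γ v, (u, γ, v) ∈ g.E ↔ (e u, γ, e v) ∈ g'.E)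
    (φ : MSO S G) {ν : ℕ → Option g.V} {ν' : ℕ → Option g'.V} {μ : ℕ → Set g.V}
    {μ' : ℕ → Set g'.V} (hν : ∀ n, ν' n = (ν n).map e) (hμ : ∀ X v, v ∈ μ X ↔ e v ∈ μ' X) :
    φ.Sat g ν μ ↔ φ.Sat g' ν' μ' := by
  induction φ generalizing ν ν' μ μ' with
  | lab σ x => simp [Sat, hν, hlab]
  | edge γ x y => simp [Sat, hν, hedge]
  | eq x y => simp [Sat, hν, e.injective.eq_iff]
  | mem x X => simp [Sat, hν, hμ]
  | not φ ih => exact not_congr (ih hν hμ)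
  | and φ ψ ih₁ ih₂ => exact and_congr (ih₁ hν hμ) (ih₂ hν hμ)
  | exN x φ ih =>
    refine e.exists_congr fun v => ih (fun n => ?_) hμ
    by_cases hn : n = x
    · subst hn; simp
    · simp [Function.update_of_ne hn, hν]
  | exS X φ ih =>
    refine (Equiv.Set.congr e).exists_congr fun U => ih hν fun Y v => ?_
    by_cases hY : Y = X
    · subst hY; simp
    · simp [Function.update_of_ne hY, hμ]

namespace MSOT

variable {S1 G1 S2 G2 : Type}

def RealizesWith (τ : MSOT S1 G1 S2 G2) (g : LGraph S1 G1) (μ : ℕ → Set g.V)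
    (h : LGraph S2 G2) : Prop :=
  τ.dom.Sat g (fun _ => none) μ ∧ (τ.outputVal g μ).Iso h

theorem realizes_iff_realizesWith_empty {τ : MSOT S1 G1 S2 G2} (hk : τ.k = 0)
    {g : LGraph S1 G1} {h : LGraph S2 G2} :
    τ.Realizes g h ↔ τ.RealizesWith g (fun _ => ∅) h := by
  refine ⟨?_, fun hw => ⟨_, fun _ _ => rfl, hw⟩⟩
  rintro ⟨μ, hμ, hw⟩
  obtain rfl : μ = fun _ => ∅ := funext fun n => hμ n (hk ▸ n.zero_le)
  exact hw

theorem outputVal_iso {S S' : Type} (τ : MSOT S G1 S2 G2) (τ' : MSOT S' G1 S2 G2)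
    {g : LGraph S G1} {g' : LGraph S' G1} (e : g.V ≃ g'.V) (eC : τ.C ≃ τ'.C)
    {μ : ℕ → Set g.V} {μ' : ℕ → Set g'.V}
    (hnode : ∀ σ c u, (τ.nodeF σ c).Sat g (valN u) μ ↔ (τ'.nodeF σ (eC c)).Sat g' (valN (e u)) μ')
    (hedge : ∀ γ c d u v, (τ.edgeF γ c d).Sat g (valN2 u v) μ ↔
      (τ'.edgeF γ (eC c) (eC d)).Sat g' (valN2 (e u) (e v)) μ') :
    (τ.outputVal g μ).Iso (τ'.outputVal g' μ') := by
  have hV : ∀ p : g.V × τ.C, (∃! σ, (τ.nodeF σ p.2).Sat g (valN p.1) μ) ↔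
      ∃! σ, (τ'.nodeF σ (eC p.2)).Sat g' (valN (e p.1)) μ' :=
    fun p => existsUnique_congr fun σ => hnode σ p.2 p.1
  refine ⟨(e.prodCongr eC).subtypeEquiv hV, fun ⟨p, hp⟩ => ?_, fun _ γ _ => hedge γ _ _ _ _⟩
  exact (((hV p).mp hp).choose_spec.2 _ ((hnode _ p.2 p.1).mp hp.choose_spec.1)).symm

theorem realizes_of_iso (τ : MSOT S1 G1 S2 G2) {g g' : LGraph S1 G1} {h : LGraph S2 G2}
    (hg : g.Iso g') : τ.Realizes g h → τ.Realizes g' h := by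
  obtain ⟨e, hlab, hedge⟩ := hg
  rintro ⟨μ, hμ, hdom, hout⟩
  have hμ' : ∀ X v, v ∈ μ X ↔ e v ∈ e '' μ X := fun _ _ => e.injective.mem_set_image.symm
  refine ⟨fun X => e '' μ X, fun n hn => by simp [hμ n hn], ?_, ?_⟩
  · exact (MSO.sat_iff_of_equiv e hlab hedge _ (fun _ => rfl) hμ').mp hdom
  · refine (outputVal_iso τ τ e (Equiv.refl _) ?_ ?_).symm.trans hout
    · exact fun σ c u => MSO.sat_iff_of_equiv e hlab hedge _ (fun n => (valN_map e u n).symm) hμ'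
    · exact fun γ c d u v =>
        MSO.sat_iff_of_equiv e hlab hedge _ (fun n => (valN2_map e u v n).symm) hμ'

theorem exists_relabelRel_realizes_iff {S : Type} (R : S → S1 → Prop) (τ : MSOT S1 G1 S2 G2)
    (g : LGraph S G1) (h : LGraph S2 G2) :
    (∃ f, RelabelRel R g f ∧ τ.Realizes f h) ↔
      ∃ l : g.V → S1, (∀ v, R (g.lab v) (l v)) ∧ τ.Realizes (g.relabel l) h := by
  simp only [LGraph.relabelRel_iff]
  constructor
  · rintro ⟨f, ⟨l, hR, hiso⟩, hf⟩
    exact ⟨l, hR, τ.realizes_of_iso hiso.symm hf⟩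
  · rintro ⟨l, hR, hl⟩
    exact ⟨_, ⟨l, hR, LGraph.Iso.refl _⟩, hl⟩

def translate {S : Type} (τ : MSOT S1 G1 S2 G2) (k : ℕ) (T : MSO S1 G1 → MSO S G1)
    (hT : ∀ φ A, φ.freeN ⊆ A → φ.freeS ⊆ Finset.range τ.k →
      (T φ).freeN ⊆ A ∧ (T φ).freeS ⊆ Finset.range k) : MSOT S G1 S2 G2 where
  k := k
  C := τ.C
  finC := τ.finC
  dom := T τ.dom
  dom_free :=
    have h := hT τ.dom ∅ τ.dom_free.1.subset τ.dom_free.2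
    ⟨Finset.subset_empty.mp h.1, h.2⟩
  nodeF σ c := T (τ.nodeF σ c)
  nodeF_free σ c := hT _ _ (τ.nodeF_free σ c).1 (τ.nodeF_free σ c).2
  edgeF γ c d := T (τ.edgeF γ c d)
  edgeF_free γ c d := hT _ _ (τ.edgeF_free γ c d).1 (τ.edgeF_free γ c d).2

def restrictDom (τ : MSOT S1 G1 S2 G2) (ψ : MSO S1 G1)
    (hψ : ψ.freeN = ∅ ∧ ψ.freeS ⊆ Finset.range τ.k) : MSOT S1 G1 S2 G2 :=
  { τ with
    dom := .and ψ τ.dom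
    dom_free := ⟨by simp [MSO.freeN, hψ.1, τ.dom_free.1], Finset.union_subset hψ.2 τ.dom_free.2⟩ }

theorem realizesWith_restrictDom_iff (τ : MSOT S1 G1 S2 G2) (ψ : MSO S1 G1)
    (hψ : ψ.freeN = ∅ ∧ ψ.freeS ⊆ Finset.range τ.k) {g : LGraph S1 G1} {μ : ℕ → Set g.V}
    {h : LGraph S2 G2} :
    (τ.restrictDom ψ hψ).RealizesWith g μ h ↔ ψ.Sat g (fun _ => none) μ ∧ τ.RealizesWith g μ h :=
  and_assoc

theorem realizesWith_translate_iff {S : Type} (τ : MSOT S1 G1 S2 G2) {k : ℕ}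
    {T : MSO S1 G1 → MSO S G1}
    (hT : ∀ φ A, φ.freeN ⊆ A → φ.freeS ⊆ Finset.range τ.k →
      (T φ).freeN ⊆ A ∧ (T φ).freeS ⊆ Finset.range k)
    {g : LGraph S1 G1} {g' : LGraph S G1} (e : g.V ≃ g'.V) {μ : ℕ → Set g.V}
    {μ' : ℕ → Set g'.V} {h : LGraph S2 G2}
    (hsat : ∀ φ ν, (T φ).Sat g' (fun n => (ν n).map e) μ' ↔ φ.Sat g ν μ) :
    (τ.translate k T hT).RealizesWith g' μ' h ↔ τ.RealizesWith g μ h := by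
  have hout : (τ.outputVal g μ).Iso ((τ.translate k T hT).outputVal g' μ') := by
    refine outputVal_iso _ _ e (Equiv.refl _) (fun σ c u => ?_) (fun γ c d u v => ?_)
    · have := (hsat (τ.nodeF σ c) (valN u)).symm
      rwa [funext (valN_map e u)] at this
    · have := (hsat (τ.edgeF γ c d) (valN2 u v)).symm
      rwa [funext (valN2_map e u v)] at this
  exact and_congr (hsat τ.dom fun _ => none) ⟨hout.trans, hout.symm.trans⟩

end MSOT

namespace MSO

variable {S G : Type} [Fintype S] {k : ℕ}

/-- `π X = some i` marks set variable `X` as the `i`-th parameter; a set quantifier binding `X`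
shadows it, whence the update of `π`. -/
noncomputable def paramsToLabels (π : ℕ → Option (Fin k)) : MSO S G → MSO (S × Finset (Fin k)) G
  | .lab σ x => labWith (·.1 = σ) x
  | .edge γ x y => .edge γ x y
  | .eq x y => .eq x y
  | .mem x X =>
    match π X with
    | some i => labWith (i ∈ ·.2) x
    | none => .mem x X
  | .not φ => .not (paramsToLabels π φ)
  | .and φ ψ => .and (paramsToLabels π φ) (paramsToLabels π ψ)
  | .exN x φ => .exN x (paramsToLabels π φ)
  | .exS X φ => .exS X (paramsToLabels (Function.update π X none) φ)

theorem freeN_paramsToLabels_subset (π : ℕ → Option (Fin k)) (φ : MSO S G) :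
    (φ.paramsToLabels π).freeN ⊆ φ.freeN := by
  induction φ generalizing π with
  | lab σ x => exact freeN_labWith_subset _ x
  | mem x X =>
    unfold paramsToLabels
    split
    · exact freeN_labWith_subset _ x
    · exact subset_rfl
  | not φ ih => exact ih π
  | and φ ψ ih₁ ih₂ => exact Finset.union_subset_union (ih₁ π) (ih₂ π)
  | exN x φ ih => exact Finset.erase_subset_erase _ (ih π)
  | exS X φ ih => exact ih _
  | edge | eq => exact subset_rfl

theorem mem_freeS_paramsToLabels {π : ℕ → Option (Fin k)} {φ : MSO S G} {Y : ℕ}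
    (hY : Y ∈ (φ.paramsToLabels π).freeS) : Y ∈ φ.freeS ∧ π Y = none := by
  induction φ generalizing π with
  | lab σ x => simp [paramsToLabels, freeS_labWith] at hY
  | mem x X =>
    unfold paramsToLabels at hY
    split at hY
    · simp [freeS_labWith] at hY
    · simp_all [freeS]
  | not φ ih => exact ih hY
  | and φ ψ ih₁ ih₂ =>
    rcases Finset.mem_union.mp hY with h | h
    · exact ⟨Finset.mem_union_left _ (ih₁ h).1, (ih₁ h).2⟩
    · exact ⟨Finset.mem_union_right _ (ih₂ h).1, (ih₂ h).2⟩
  | exN x φ ih => exact ih hY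
  | exS X φ ih =>
    obtain ⟨hYX, hY⟩ := Finset.mem_erase.mp hY
    obtain ⟨h₁, h₂⟩ := ih hY
    exact ⟨Finset.mem_erase.mpr ⟨hYX, h₁⟩, by rwa [Function.update_of_ne hYX] at h₂⟩
  | edge | eq => simp [paramsToLabels, freeS] at hY

theorem sat_paramsToLabels_iff {g : LGraph S G} {l : g.V → S × Finset (Fin k)}
    (hl : ∀ v, (l v).1 = g.lab v) (φ : MSO S G) {π : ℕ → Option (Fin k)} {μ μ' : ℕ → Set g.V}
    (hparam : ∀ X i, π X = some i → ∀ v, v ∈ μ X ↔ i ∈ (l v).2)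
    (hother : ∀ X, π X = none → μ' X = μ X) (ν : ℕ → Option g.V) :
    (φ.paramsToLabels π).Sat (g.relabel l) ν μ' ↔ φ.Sat g ν μ := by
  induction φ generalizing π μ μ' ν with
  | lab σ x => simp [paramsToLabels, Sat, hl]
  | mem x X =>
    unfold paramsToLabels
    split
    · next i hi => simp [Sat, hparam X i hi]
    · next hi => simp [Sat, hother X hi]
  | not φ ih => exact not_congr (ih hparam hother ν)
  | and φ ψ ih₁ ih₂ => exact and_congr (ih₁ hparam hother ν) (ih₂ hparam hother ν)
  | exN x φ ih => exact exists_congr fun v => ih hparam hother _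
  | exS X φ ih =>
    refine exists_congr fun U => ih (fun Y i hi v => ?_) (fun Y hY => ?_) ν
    · have hYX : Y ≠ X := by rintro rfl; simp at hi
      rw [Function.update_of_ne hYX] at hi ⊢
      exact hparam Y i hi v
    · by_cases hYX : Y = X
      · subst hYX; simp
      · rw [Function.update_of_ne hYX] at hY
        rw [Function.update_of_ne hYX, Function.update_of_ne hYX]
        exact hother Y hY
  | edge | eq => rfl

end MSO

def paramIndex (k X : ℕ) : Option (Fin k) :=
  if h : X < k then some ⟨X, h⟩ else none

namespace MSOT

variable {S1 G1 S2 G2 : Type} [Fintype S1]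

noncomputable def paramsToLabels (τ : MSOT S1 G1 S2 G2) :
    MSOT (S1 × Finset (Fin τ.k)) G1 S2 G2 :=
  τ.translate 0 (MSO.paramsToLabels (paramIndex τ.k)) fun φ _ hN hS =>
    ⟨(MSO.freeN_paramsToLabels_subset _ φ).trans hN, fun Y hY => by
      obtain ⟨hYφ, hY⟩ := MSO.mem_freeS_paramsToLabels hY
      simp [paramIndex, Finset.mem_range.mp (hS hYφ)] at hY⟩

theorem realizesWith_paramsToLabels_iff (τ : MSOT S1 G1 S2 G2) {g : LGraph S1 G1}
    {l : g.V → S1 × Finset (Fin τ.k)} (hl : ∀ v, (l v).1 = g.lab v) {μ : ℕ → Set g.V}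
    (hparam : ∀ (i : Fin τ.k) v, v ∈ μ i ↔ i ∈ (l v).2) (hvanish : ∀ X, τ.k ≤ X → μ X = ∅)
    {h : LGraph S2 G2} :
    τ.paramsToLabels.RealizesWith (g.relabel l) (fun _ => ∅) h ↔ τ.RealizesWith g μ h := by
  refine realizesWith_translate_iff (g' := g.relabel l) τ _ (Equiv.refl _) fun φ ν => ?_
  simp only [Equiv.coe_refl, Option.map_id_fun, id_eq]
  refine MSO.sat_paramsToLabels_iff hl φ (fun X i hi v => ?_) (fun X hX => ?_) ν
  · unfold paramIndex at hi
    split_ifs at hi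
    cases hi
    exact hparam ⟨X, _⟩ v
  · unfold paramIndex at hX
    split_ifs at hX with hXk
    exact (hvanish X (not_lt.mp hXk)).symm

theorem realizes_iff_exists_paramsToLabels (τ : MSOT S1 G1 S2 G2) (g : LGraph S1 G1)
    (h : LGraph S2 G2) :
    τ.Realizes g h ↔ ∃ l : g.V → S1 × Finset (Fin τ.k), (∀ v, (l v).1 = g.lab v) ∧
      τ.paramsToLabels.Realizes (g.relabel l) h := by
  simp only [realizes_iff_realizesWith_empty (τ := τ.paramsToLabels) rfl]
  constructor
  · rintro ⟨μ, hvanish, hw⟩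
    classical
    refine ⟨fun v => (g.lab v, Finset.univ.filter (v ∈ μ ·)), fun _ => rfl, ?_⟩
    exact (τ.realizesWith_paramsToLabels_iff (fun _ => rfl) (by simp) hvanish).mpr hw
  · rintro ⟨l, hl, hw⟩
    let μ : ℕ → Set g.V := fun X => {v | ∃ i : Fin τ.k, (i : ℕ) = X ∧ i ∈ (l v).2}
    have hvanish : ∀ X, τ.k ≤ X → μ X = ∅ := by
      intro X hX
      ext v
      simp only [μ, Set.mem_ofPred_eq, Set.mem_empty_iff_false, iff_false]
      rintro ⟨i, rfl, -⟩
      exact absurd hX (not_le.mpr i.isLt)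
    have hparam : ∀ (i : Fin τ.k) v, v ∈ μ i ↔ i ∈ (l v).2 := by simp [μ, Fin.val_inj]
    exact ⟨μ, hvanish, (τ.realizesWith_paramsToLabels_iff hl hparam hvanish).mp hw⟩

end MSOT

namespace MSO

variable {S S' G : Type} {n : ℕ}

/-- The set variables of the formula are shifted past the `n` parameters, so that no quantifier
captures a parameter. -/
def labelsToParams (ι : S' → Fin n) : MSO S' G → MSO S G
  | .lab σ x => .mem x (ι σ)
  | .edge γ x y => .edge γ x y
  | .eq x y => .eq x y
  | .mem x X => .mem x (X + n)
  | .not φ => .not (labelsToParams ι φ)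
  | .and φ ψ => .and (labelsToParams ι φ) (labelsToParams ι ψ)
  | .exN x φ => .exN x (labelsToParams ι φ)
  | .exS X φ => .exS (X + n) (labelsToParams ι φ)

theorem freeN_labelsToParams (ι : S' → Fin n) (φ : MSO S' G) :
    (φ.labelsToParams ι : MSO S G).freeN = φ.freeN := by
  induction φ <;> simp_all [labelsToParams, freeN]

theorem freeS_labelsToParams_subset (ι : S' → Fin n) (φ : MSO S' G) :
    (φ.labelsToParams ι : MSO S G).freeS ⊆ Finset.range n ∪ φ.freeS.image (· + n) := by
  induction φ with
  | lab σ x => simp [labelsToParams, freeS]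
  | mem x X => simp [labelsToParams, freeS]
  | not φ ih => exact ih
  | and φ ψ ih₁ ih₂ =>
    refine Finset.union_subset (ih₁.trans ?_) (ih₂.trans ?_) <;>
      exact Finset.union_subset_union subset_rfl (Finset.image_subset_image (by simp [freeS]))
  | exN x φ ih => exact ih
  | exS X φ ih =>
    intro Y hY
    obtain ⟨hYX, hY⟩ := Finset.mem_erase.mp hY
    rcases Finset.mem_union.mp (ih hY) with h | h
    · exact Finset.mem_union_left _ h
    · obtain ⟨Z, hZ, rfl⟩ := Finset.mem_image.mp h
      refine Finset.mem_union_right _ (Finset.mem_image_of_mem _ (Finset.mem_erase.mpr ⟨?_, hZ⟩))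
      rintro rfl
      exact hYX rfl
  | edge | eq => simp [labelsToParams, freeS]

theorem sat_labelsToParams_iff {g : LGraph S G} {l : g.V → S'} (ι : S' → Fin n) (φ : MSO S' G)
    {μ μ' : ℕ → Set g.V} (hlab : ∀ σ v, v ∈ μ (ι σ) ↔ l v = σ) (hshift : ∀ X, μ (X + n) = μ' X)
    (ν : ℕ → Option g.V) :
    (φ.labelsToParams ι).Sat g ν μ ↔ φ.Sat (g.relabel l) ν μ' := by
  induction φ generalizing μ μ' ν with
  | lab σ x => simp [labelsToParams, Sat, hlab]
  | mem x X => simp [labelsToParams, Sat, hshift]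
  | not φ ih => exact not_congr (ih hlab hshift ν)
  | and φ ψ ih₁ ih₂ => exact and_congr (ih₁ hlab hshift ν) (ih₂ hlab hshift ν)
  | exN x φ ih => exact exists_congr fun v => ih hlab hshift _
  | exS X φ ih =>
    refine exists_congr fun U => ih (fun σ v => ?_) (fun Y => ?_) ν
    · rw [Function.update_of_ne (by omega)]
      exact hlab σ v
    · by_cases hYX : Y = X
      · subst hYX; simp
      · rw [Function.update_of_ne (by omega), Function.update_of_ne hYX, hshift]
  | edge | eq => rfl

open Classical in
noncomputable def isRelabelling [Fintype S] [Fintype S'] (R : S → S' → Prop) (ι : S' → Fin n) :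
    MSO S G :=
  allN 0 <| disj <| Finset.univ.toList.map fun σ' => .and (labWith (R · σ') 0) <|
    conj <| Finset.univ.toList.map fun τ' =>
      if τ' = σ' then .mem 0 (ι τ') else .not (.mem 0 (ι τ'))

theorem sat_isRelabelling_iff [Fintype S] [Fintype S'] {R : S → S' → Prop} {ι : S' → Fin n}
    {g : LGraph S G} {ν : ℕ → Option g.V} {μ : ℕ → Set g.V} :
    (isRelabelling R ι).Sat g ν μ ↔
      ∃ l : g.V → S', (∀ v, R (g.lab v) (l v)) ∧ ∀ σ v, v ∈ μ (ι σ) ↔ l v = σ := by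
  classical
  have hmem : ∀ v σ' τ', (if τ' = σ' then mem 0 (ι τ') else (mem 0 (ι τ')).not).Sat g
      (Function.update ν 0 (some v)) μ ↔ (v ∈ μ (ι τ') ↔ τ' = σ') := by
    intro v σ' τ'
    split_ifs with h <;> simp [Sat, h]
  simp only [isRelabelling, sat_allN, sat_disj, sat_conj, List.mem_map, exists_exists_eq_and,
    forall_exists_index, forall_apply_eq_imp_iff, Finset.mem_toList, Finset.mem_univ, true_and, Sat,
    sat_labWith, Function.update_self, Option.some.injEq, exists_eq_left', hmem]
  rw [Classical.skolem]
  refine exists_congr fun l => forall_and.trans (and_congr_right' ?_)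
  exact ⟨fun h σ v => (h v σ).trans eq_comm, fun h v σ => (h σ v).trans eq_comm⟩

theorem freeN_isRelabelling [Fintype S] [Fintype S'] (R : S → S' → Prop) (ι : S' → Fin n) :
    (isRelabelling R ι : MSO S G).freeN = ∅ := by
  refine Finset.subset_empty.mp fun x hx => ?_
  obtain ⟨hx0, hx⟩ := Finset.mem_erase.mp hx
  refine (hx0 (Finset.mem_singleton.mp (freeN_disj_subset (fun φ hφ => ?_) hx))).elim
  obtain ⟨σ', -, rfl⟩ := List.mem_map.mp hφ
  refine Finset.union_subset (freeN_labWith_subset _ 0) (freeN_conj_subset fun ψ hψ => ?_)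
  obtain ⟨τ', -, rfl⟩ := List.mem_map.mp hψ
  split_ifs <;> simp [freeN]

theorem freeS_isRelabelling_subset [Fintype S] [Fintype S'] (R : S → S' → Prop)
    (ι : S' → Fin n) : (isRelabelling R ι : MSO S G).freeS ⊆ Finset.range n := by
  refine freeS_disj_subset fun φ hφ => ?_
  obtain ⟨σ', -, rfl⟩ := List.mem_map.mp hφ
  refine Finset.union_subset (by simp [freeS_labWith]) (freeS_conj_subset fun ψ hψ => ?_)
  obtain ⟨τ', -, rfl⟩ := List.mem_map.mp hψ
  split_ifs <;> simp [freeS]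

end MSO

namespace MSOT

variable {S1 S' G1 S2 G2 : Type} {n : ℕ}

def labelsToParams (ι : S' → Fin n) (τ : MSOT S' G1 S2 G2) (hk : τ.k = 0) : MSOT S1 G1 S2 G2 :=
  τ.translate n (MSO.labelsToParams ι) fun φ _ hN hS =>
    ⟨(MSO.freeN_labelsToParams ι φ).le.trans hN, by
      have hφ : φ.freeS = ∅ := by simpa [hk] using hS
      simpa [hφ] using MSO.freeS_labelsToParams_subset ι φ⟩

noncomputable def guessRelabelling [Fintype S1] [Fintype S'] (R : S1 → S' → Prop)
    (ι : S' → Fin n) (τ : MSOT S' G1 S2 G2) (hk : τ.k = 0) : MSOT S1 G1 S2 G2 :=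
  (τ.labelsToParams ι hk).restrictDom (MSO.isRelabelling R ι)
    ⟨MSO.freeN_isRelabelling R ι, MSO.freeS_isRelabelling_subset R ι⟩

theorem realizesWith_labelsToParams_iff {ι : S' → Fin n} (τ : MSOT S' G1 S2 G2) (hk : τ.k = 0)
    {g : LGraph S1 G1} {l : g.V → S'} {μ : ℕ → Set g.V} (hlab : ∀ σ v, v ∈ μ (ι σ) ↔ l v = σ)
    (hshift : ∀ X, μ (X + n) = ∅) {h : LGraph S2 G2} :
    (τ.labelsToParams ι hk).RealizesWith g μ h ↔ τ.RealizesWith (g.relabel l) (fun _ => ∅) h := by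
  refine realizesWith_translate_iff (g := g.relabel l) (g' := g) τ _ (Equiv.refl _) fun φ ν => ?_
  simp only [Equiv.coe_refl, Option.map_id_fun, id_eq]
  exact MSO.sat_labelsToParams_iff ι φ hlab hshift ν

theorem realizes_guessRelabelling_iff [Fintype S1] [Fintype S'] (R : S1 → S' → Prop)
    {ι : S' → Fin n} (hι : Function.Injective ι) (τ : MSOT S' G1 S2 G2) (hk : τ.k = 0)
    (g : LGraph S1 G1) (h : LGraph S2 G2) :
    (τ.guessRelabelling R ι hk).Realizes g h ↔
      ∃ l : g.V → S', (∀ v, R (g.lab v) (l v)) ∧ τ.Realizes (g.relabel l) h := by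
  simp only [realizes_iff_realizesWith_empty hk]
  constructor
  · rintro ⟨μ, hvanish, hw⟩
    obtain ⟨hrel, hw⟩ := (realizesWith_restrictDom_iff _ _ _).mp hw
    obtain ⟨l, hR, hlab⟩ := MSO.sat_isRelabelling_iff.mp hrel
    exact ⟨l, hR, (realizesWith_labelsToParams_iff τ hk hlab fun X =>
      hvanish _ (Nat.le_add_left n X)).mp hw⟩
  · rintro ⟨l, hR, hw⟩
    let μ : ℕ → Set g.V := fun X => {v | ∃ σ, (ι σ : ℕ) = X ∧ l v = σ}
    have hvanish : ∀ X, n ≤ X → μ X = ∅ := by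
      intro X hX
      ext v
      simp only [μ, Set.mem_ofPred_eq, Set.mem_empty_iff_false, iff_false]
      rintro ⟨σ, rfl, -⟩
      exact absurd hX (not_le.mpr (ι σ).isLt)
    have hlab : ∀ σ v, v ∈ μ (ι σ) ↔ l v = σ := by
      simp [μ, Fin.val_inj, hι.eq_iff]
    refine ⟨μ, hvanish, (realizesWith_restrictDom_iff _ _ _).mpr ⟨?_, ?_⟩⟩
    · exact MSO.sat_isRelabelling_iff.mpr ⟨l, hR, hlab⟩
    · exact (realizesWith_labelsToParams_iff τ hk hlab fun X =>
        hvanish _ (Nat.le_add_left n X)).mpr hw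

end MSOT

/-- **grNMSO = grREL ∘ grMSO**: every nondeterministic mso definable graph
transduction is a nondeterministic node relabelling followed by a
deterministic (parameterless) mso transduction, and conversely. -/
theorem mso_gsm_stmt_13 :
    (∀ (S1 G1 S2 G2 : Type), Finite S1 →
      ∀ τ : MSOT S1 G1 S2 G2,
        ∃ (S' : Type) (R : S1 → S' → Prop) (τ' : MSOT S' G1 S2 G2),
          Finite S' ∧ τ'.k = 0 ∧
          ∀ (g : LGraph S1 G1) (h : LGraph S2 G2),
            τ.Realizes g h ↔
              ∃ f : LGraph S' G1, RelabelRel R g f ∧ τ'.Realizes f h) ∧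
    (∀ (S1 G1 S2 G2 S' : Type), Finite S1 → Finite S' →
      ∀ (R : S1 → S' → Prop) (τ' : MSOT S' G1 S2 G2), τ'.k = 0 →
        ∃ τ : MSOT S1 G1 S2 G2,
          ∀ (g : LGraph S1 G1) (h : LGraph S2 G2),
            τ.Realizes g h ↔
              ∃ f : LGraph S' G1, RelabelRel R g f ∧ τ'.Realizes f h) := by
  refine ⟨fun S1 G1 S2 G2 _ τ => ?_, fun S1 G1 S2 G2 S' _ _ R τ' hk => ?_⟩
  · have := Fintype.ofFinite S1
    refine ⟨_, fun σ p => p.1 = σ, τ.paramsToLabels, inferInstance, rfl, fun g h => ?_⟩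
    rw [MSOT.exists_relabelRel_realizes_iff]
    exact τ.realizes_iff_exists_paramsToLabels g h
  · have := Fintype.ofFinite S1
    have := Fintype.ofFinite S'
    refine ⟨τ'.guessRelabelling R (Fintype.equivFin S') hk, fun g h => ?_⟩
    rw [MSOT.exists_relabelRel_realizes_iff]
    exact MSOT.realizes_guessRelabelling_iff R (Fintype.equivFin S').injective τ' hk g h
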